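/- Let s ∈ (0,1). For β > 0 let y(β) denote the unique y ∈ (0,1) satisfying (1 − y²)^s = β·y. Then there exist M > 0 and a sequence of real numbers (b_j)_{j≥1} such that for all β > M the series Σ_{j=1}^∞ b_j β^{−2j} converges absolutely and y(β) = (1/β)·(1 + Σ_{j=1}^∞ b_j β^{−2j}). -/

import Mathlib

/-!
With `w = y ^ 2` and `t = β⁻²` the equation becomes `w = t (1 - w) ^ (2 s)`, i.e.
`w (1 - w) ^ (-2 s) = t`. The left side is analytic at `0` with derivative `1`, so its local
inverse `W` is analytic at `0` with `W 0 = 0`; since `w ↦ w - t (1 - w) ^ (2 s)` is increasing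
on `w < 1`, `y ^ 2 = W t`. Hence `β y = (1 - W t) ^ s` is an analytic function of `t` taking
the value `1` at `0`, and the `b_j` are its Taylor coefficients.
-/

open Filter Topology

theorem AnalyticAt.rpow_const {E : Type*} [NormedAddCommGroup E] [NormedSpace ℝ E]
    {f : E → ℝ} {x : E} (a : ℝ) (hf : AnalyticAt ℝ f x) (hx : 0 < f x) :
    AnalyticAt ℝ (fun z => f z ^ a) x := by
  have h : AnalyticAt ℝ (fun z => Real.exp (Real.log (f z) * a)) x :=
    (((analyticAt_log hx).comp hf).mul (analyticAt_const (v := a))).rexp'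
  refine h.congr ?_
  filter_upwards [continuousAt_const.eventually_lt hf.continuousAt hx] with z hz
  simp [Real.rpow_def_of_pos hz]

theorem HasFPowerSeriesAt.eventually_summable_norm_pow_smul_coeff {𝕜 E : Type*}
    [NontriviallyNormedField 𝕜] [NormedAddCommGroup E] [NormedSpace 𝕜 E]
    {f : 𝕜 → E} {p : FormalMultilinearSeries 𝕜 𝕜 E} {z₀ : 𝕜} (hf : HasFPowerSeriesAt f p z₀) :
    ∀ᶠ z in 𝓝 (0 : 𝕜), Summable fun n => ‖z ^ n • p.coeff n‖ := by
  filter_upwards [Metric.eball_mem_nhds (0 : 𝕜) hf.radius_pos] with z hz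
  simpa using p.summable_norm_apply hz

theorem eq_of_eq_mul_one_sub_rpow {t a w w' : ℝ} (ht : 0 ≤ t) (ha : 0 ≤ a) (hw : w < 1)
    (hw' : w' < 1) (h : w = t * (1 - w) ^ a) (h' : w' = t * (1 - w') ^ a) : w = w' := by
  have key : ∀ {u v : ℝ}, u < 1 → v < 1 → u = t * (1 - u) ^ a → v = t * (1 - v) ^ a →
      u ≤ v := by
    intro u v hu hv hu' hv'
    by_contra! hvu
    have : (1 - u) ^ a ≤ (1 - v) ^ a := Real.rpow_le_rpow (by linarith) (by linarith) ha
    nlinarith [mul_le_mul_of_nonneg_left this ht]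
  exact le_antisymm (key hw hw' h h') (key hw' hw h' h)

theorem exists_analyticAt_eq_mul_one_sub_rpow (a : ℝ) :
    ∃ W : ℝ → ℝ, AnalyticAt ℝ W 0 ∧ W 0 = 0 ∧
      ∀ᶠ t in 𝓝 0, W t < 1 ∧ W t = t * (1 - W t) ^ a := by
  set φ : ℝ → ℝ := fun w => w * (1 - w) ^ (-a)
  have hψ : AnalyticAt ℝ (fun w : ℝ => (1 - w) ^ (-a)) 0 :=
    (analyticAt_const.sub analyticAt_id).rpow_const _ (by norm_num)
  have hφ : AnalyticAt ℝ φ 0 := analyticAt_id.mul hψ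
  have hφ' : deriv φ 0 ≠ 0 := by
    have : HasDerivAt φ 1 0 := by
      simpa using (hasDerivAt_id' 0).fun_mul hψ.differentiableAt.hasDerivAt
    simp [this.deriv]
  have hφ0 : φ 0 = 0 := by simp [φ]
  set W := hφ.hasStrictDerivAt.localInverse _ _ _ hφ'
  have hW : AnalyticAt ℝ W 0 := hφ0 ▸ hφ.analyticAt_localInverse hφ'
  have hW0 : W 0 = 0 := by
    simpa [hφ0] using
      (hφ.hasStrictDerivAt.hasStrictFDerivAt_equiv hφ').localInverse_apply_image
  refine ⟨W, hW, hW0, ?_⟩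
  have hright : ∀ᶠ t in 𝓝 0, φ (W t) = t :=
    hφ0 ▸ hφ.hasStrictDerivAt.eventually_right_inverse hφ'
  have hlt : ∀ᶠ t in 𝓝 0, W t < 1 :=
    hW.continuousAt.eventually_lt continuousAt_const (by simp [hW0])
  filter_upwards [hright, hlt] with t ht hlt
  refine ⟨hlt, ?_⟩
  generalize W t = u at ht hlt ⊢
  have hpos : 0 < 1 - u := by linarith
  rw [← ht, mul_assoc, ← Real.rpow_add hpos, neg_add_cancel, Real.rpow_zero, mul_one]

theorem sq_eq_inv_sq_mul_one_sub_sq_rpow {s β y : ℝ} (hβ : β ≠ 0) (hy : 0 ≤ 1 - y ^ 2)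
    (h : (1 - y ^ 2) ^ s = β * y) : y ^ 2 = (β ^ 2)⁻¹ * (1 - y ^ 2) ^ (2 * s) := by
  rw [mul_comm 2 s, Real.rpow_mul hy, Real.rpow_two, h]
  field_simp

theorem Real.rpow_neg_two_mul_add_one {β : ℝ} (hβ : 0 ≤ β) (j : ℕ) :
    β ^ (-(2 : ℝ) * ((j : ℝ) + 1)) = ((β ^ 2)⁻¹) ^ (j + 1) := by
  rw [neg_mul, Real.rpow_neg hβ, inv_pow, ← pow_mul]
  norm_cast

theorem stmt_2 (s : ℝ) (hs0 : 0 < s) :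
    ∃ M : ℝ, 0 < M ∧ ∃ b : ℕ → ℝ,
      ∀ β : ℝ, M < β →
        ∀ y : ℝ, y ∈ Set.Ioo (0 : ℝ) 1 → (1 - y ^ 2) ^ s = β * y →
          Summable (fun j : ℕ => |b (j + 1) * β ^ (-(2 : ℝ) * ((j : ℝ) + 1))|) ∧
          y = (1 / β) * (1 + ∑' j : ℕ, b (j + 1) * β ^ (-(2 : ℝ) * ((j : ℝ) + 1))) := by
  obtain ⟨W, hW, hW0, hWeq⟩ := exists_analyticAt_eq_mul_one_sub_rpow (2 * s)
  obtain ⟨p, hp⟩ : AnalyticAt ℝ (fun t => (1 - W t) ^ s) 0 :=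
    (analyticAt_const.sub hW).rpow_const s (by simp [hW0])
  have hp0 : p.coeff 0 = 1 := by simpa [hW0] using hp.coeff_zero 1
  obtain ⟨δ, hδ, hsmall⟩ := Metric.eventually_nhds_iff.1
    ((hWeq.and (hasFPowerSeriesAt_iff.1 hp)).and hp.eventually_summable_norm_pow_smul_coeff)
  refine ⟨1 + δ⁻¹, by positivity, p.coeff, fun β hβ y ⟨hy0, hy1⟩ hy => ?_⟩
  have hβ0 : 0 < β := by linarith [inv_pos.2 hδ]
  set t := (β ^ 2)⁻¹
  have ht : dist t 0 < δ := by
    rw [Real.dist_0_eq_abs, abs_of_pos (by positivity)]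
    exact inv_lt_of_inv_lt₀ hδ (by nlinarith)
  obtain ⟨⟨⟨hWlt, hWt⟩, hsum⟩, habs⟩ := hsmall ht
  have hyW : y ^ 2 = W t := eq_of_eq_mul_one_sub_rpow (by positivity) (by positivity)
    (by nlinarith) hWlt (sq_eq_inv_sq_mul_one_sub_sq_rpow hβ0.ne' (by nlinarith) hy) hWt
  have hterm (j : ℕ) : p.coeff (j + 1) * β ^ (-(2 : ℝ) * ((j : ℝ) + 1)) =
      t ^ (j + 1) • p.coeff (j + 1) := by
    rw [Real.rpow_neg_two_mul_add_one hβ0.le, smul_eq_mul, mul_comm]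
  rw [zero_add] at hsum
  constructor
  · simpa only [hterm, Real.norm_eq_abs] using (summable_nat_add_iff 1).2 habs
  · have hβy : β * y = 1 + ∑' j : ℕ, t ^ (j + 1) • p.coeff (j + 1) := by
      rw [← hy, hyW, ← hsum.tsum_eq, hsum.summable.tsum_eq_zero_add, pow_zero, one_smul, hp0]
    rw [tsum_congr hterm, ← hβy]
    field_simp
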